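/- arXiv:1209.1607 — 5 statements merged into one kernel-verified Lean document; each statement's English description precedes it below -/
import Mathlib

section
/- Let M be a monoid and A an abelian group, and for a monoid N let Map_n(N, A) denote the abelian group of normalized maps f: N → A (with f(e)=0) that are polynomial of degree ≤ n (i.e., whose linear extension vanishes on I^{n+1}(N)). Then precomposition with the unit η_M: M → U(g(M)) of the groupification adjunction gives an isomorphism of abelian groups Map_n(U(g(M)), A) → Map_n(M, A). -/
open MonoidAlgebra

/-- The augmentation map `ℤ[M] → ℤ`. -/
noncomputable def augmentation (M : Type*) [Monoid M] :
    MonoidAlgebra ℤ M →ₗ[ℤ] ℤ :=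
  (MonoidAlgebra.lift ℤ ℤ M (1 : M →* ℤ)).toLinearMap

/-- The augmentation ideal `I(M)`, as a `ℤ`-submodule of `ℤ[M]`. -/
noncomputable def augIdeal (M : Type*) [Monoid M] :
    Submodule ℤ (MonoidAlgebra ℤ M) :=
  LinearMap.ker (augmentation M)

/-- A map `f : M → A` with `f(e) = 0` is *polynomial of degree ≤ n* if its
`ℤ`-linear extension `ℤ[M] → A` vanishes on `I^{n+1}(M)`. -/
def IsPolyMap (M : Type*) [Monoid M] {A : Type*} [AddCommGroup A]
    (n : ℕ) (f : M → A) : Prop :=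
  f 1 = 0 ∧
    ∀ x ∈ (augIdeal M) ^ (n + 1), Finsupp.linearCombination ℤ f x.coeff = 0

namespace PolyAux

variable {N : Type*} [Monoid N]

/-- The augmentation as an algebra hom. -/
noncomputable def augA (N : Type*) [Monoid N] : MonoidAlgebra ℤ N →ₐ[ℤ] ℤ :=
  MonoidAlgebra.lift ℤ ℤ N 1

lemma mem_augIdeal_iff (x : MonoidAlgebra ℤ N) : x ∈ augIdeal N ↔ augA N x = 0 :=
  LinearMap.mem_ker

noncomputable def lcM {A : Type*} [AddCommGroup A] (v : N → A) :
    MonoidAlgebra ℤ N →ₗ[ℤ] A where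
  toFun x := Finsupp.linearCombination ℤ v x.coeff
  map_add' x y := by simp only [MonoidAlgebra.coeff_add, map_add]
  map_smul' c x := by simp only [MonoidAlgebra.coeff_smul, map_smul, RingHom.id_apply]

lemma lcM_apply {A : Type*} [AddCommGroup A] (v : N → A) (x : MonoidAlgebra ℤ N) :
    lcM v x = Finsupp.linearCombination ℤ v x.coeff := rfl

lemma lc_single {A : Type*} [AddCommGroup A] (v : N → A) (a : N) (c : ℤ) :
    lcM v (single a c : MonoidAlgebra ℤ N) = c • v a := by
  have h := Finsupp.linearCombination_single (M := A) ℤ (v := v) c a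
  exact h

lemma aug_single (g : N) (c : ℤ) : augA N (single g c) = c := by
  simp [augA]

lemma mul_mem_aug (a : MonoidAlgebra ℤ N) {x : MonoidAlgebra ℤ N}
    (hx : x ∈ augIdeal N) : a * x ∈ augIdeal N := by
  rw [mem_augIdeal_iff] at *
  rw [map_mul, hx, mul_zero]

lemma aug_mul_mem {x : MonoidAlgebra ℤ N} (hx : x ∈ augIdeal N)
    (a : MonoidAlgebra ℤ N) : x * a ∈ augIdeal N := by
  rw [mem_augIdeal_iff] at *
  rw [map_mul, hx, zero_mul]

lemma top_mul_pow (k : ℕ) :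
    (⊤ : Submodule ℤ (MonoidAlgebra ℤ N)) * (augIdeal N) ^ (k + 1) ≤ (augIdeal N) ^ (k + 1) := by
  rw [pow_succ', ← mul_assoc]
  exact mul_le_mul'
    (Submodule.mul_le.mpr fun a _ x hx => mul_mem_aug a hx) le_rfl

lemma pow_mul_top (k : ℕ) :
    (augIdeal N) ^ (k + 1) * ⊤ ≤ (augIdeal N) ^ (k + 1) := by
  rw [pow_succ, mul_assoc]
  exact mul_le_mul' le_rfl
    (Submodule.mul_le.mpr fun a ha x _ => aug_mul_mem ha x)

lemma mul_mem_pow (a : MonoidAlgebra ℤ N) {k : ℕ} {x : MonoidAlgebra ℤ N}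
    (hx : x ∈ (augIdeal N) ^ (k + 1)) : a * x ∈ (augIdeal N) ^ (k + 1) :=
  top_mul_pow k (Submodule.mul_mem_mul Submodule.mem_top hx)

lemma pow_mem_mul {k : ℕ} {x : MonoidAlgebra ℤ N}
    (hx : x ∈ (augIdeal N) ^ (k + 1)) (a : MonoidAlgebra ℤ N) :
    x * a ∈ (augIdeal N) ^ (k + 1) :=
  pow_mul_top k (Submodule.mul_mem_mul hx Submodule.mem_top)

lemma augIdeal_eq_span :
    augIdeal N = Submodule.span ℤ (Set.range fun g : N => single g 1 - 1) := by
  apply le_antisymm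
  · intro x hx
    have key : ∀ y : MonoidAlgebra ℤ N,
        y - (augA N y) • (1 : MonoidAlgebra ℤ N) ∈
          Submodule.span ℤ (Set.range fun g : N => single g 1 - 1) := by
      intro y
      induction y using MonoidAlgebra.induction_linear with
      | zero => simp
      | add f g hf hg =>
        rw [map_add, add_smul, ← sub_add_sub_comm]
        exact Submodule.add_mem _ hf hg
      | single a b =>
        have h1 : (single a b : MonoidAlgebra ℤ N) - (augA N (single a b)) • 1
            = b • (single a 1 - 1) := by
          rw [aug_single, smul_sub, MonoidAlgebra.smul_single', mul_one]
        rw [h1]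
        exact Submodule.smul_mem _ _ (Submodule.subset_span ⟨a, rfl⟩)
    have h0 : augA N x = 0 := (mem_augIdeal_iff x).mp hx
    have := key x
    rwa [h0, zero_smul, sub_zero] at this
  · rw [Submodule.span_le]
    rintro _ ⟨g, rfl⟩
    rw [SetLike.mem_coe, mem_augIdeal_iff, map_sub, map_one, aug_single, sub_self]

lemma pow_le_pow' {B : Type*} [Semiring B] [Algebra ℤ B]
    {p q : Submodule ℤ B} (h : p ≤ q) (k : ℕ) : p ^ k ≤ q ^ k := by
  induction k with
  | zero => exact le_rfl
  | succ k ih => rw [pow_succ, pow_succ]; exact mul_le_mul' ih h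

universe u

lemma subgroup_eq_top {M : Type u} {G : Type u} [Monoid M] [Group G] (η : M →* G)
    (huniv : ∀ (H : Type u) [Group H] (f : M →* H), ∃! φ : G →* H, φ.comp η = f)
    (U : Subgroup G) (hU : ∀ m, η m ∈ U) (g : G) : g ∈ U := by
  obtain ⟨φ, hφ, -⟩ := huniv ↥U (η.codRestrict U hU)
  obtain ⟨ι, -, huniq⟩ := huniv G η
  have h1 : (U.subtype.comp φ).comp η = η := by
    ext m
    have := DFunLike.congr_fun hφ m
    simpa using congrArg Subtype.val this
  have h2 := huniq _ h1
  have h3 := huniq (MonoidHom.id G) (by ext m; rfl)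
  have h4 : U.subtype.comp φ = MonoidHom.id G := h2.trans h3.symm
  have h5 := DFunLike.congr_fun h4 g
  simp only [MonoidHom.comp_apply, MonoidHom.id_apply, Subgroup.coe_subtype] at h5
  rw [← h5]
  exact (φ g).2



variable (M : Type*) [Monoid M] (n : ℕ)

/-- `J = I(M)^(n+1)`. -/
noncomputable def Jmod : Submodule ℤ (MonoidAlgebra ℤ M) := (augIdeal M) ^ (n + 1)

/-- The quotient module `ℤ[M]/I^{n+1}`. -/
abbrev Qmod := MonoidAlgebra ℤ M ⧸ Jmod M n

/-- Left multiplication by `a` on the quotient. -/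
noncomputable def rho (a : MonoidAlgebra ℤ M) : Module.End ℤ (Qmod M n) :=
  Submodule.mapQ _ _ (LinearMap.mul ℤ (MonoidAlgebra ℤ M) a)
    (fun x hx => Submodule.mem_comap.mpr (mul_mem_pow a hx))

lemma rho_mk (a x : MonoidAlgebra ℤ M) :
    rho M n a (Submodule.Quotient.mk x) = Submodule.Quotient.mk (a * x) := by
  rw [rho, Submodule.mapQ_apply]
  rfl

lemma rho_ext {e e' : Module.End ℤ (Qmod M n)}
    (h : ∀ x : MonoidAlgebra ℤ M, e (Submodule.Quotient.mk x) = e' (Submodule.Quotient.mk x)) :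
    e = e' := by
  refine Submodule.linearMap_qext _ (LinearMap.ext fun x => ?_)
  simpa using h x

lemma rho_mul (a b : MonoidAlgebra ℤ M) :
    rho M n (a * b) = rho M n a * rho M n b := by
  refine rho_ext M n fun x => ?_
  rw [rho_mk, Module.End.mul_apply, rho_mk, rho_mk, mul_assoc]

lemma rho_eq_one {a : MonoidAlgebra ℤ M} (h : a - 1 ∈ Jmod M n) : rho M n a = 1 := by
  refine rho_ext M n fun x => ?_
  rw [rho_mk, Module.End.one_apply]
  rw [Submodule.Quotient.eq]
  have : a * x - x = (a - 1) * x := by rw [sub_mul, one_mul]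
  rw [this]
  exact pow_mem_mul h x

/-- `∑_{j≤n} (1 - m)^j`, the inverse of `m` modulo `I^{n+1}`. -/
noncomputable def geomInv (m : M) : MonoidAlgebra ℤ M :=
  ∑ j ∈ Finset.range (n + 1), (1 - single m 1) ^ j

lemma single_sub_one_mem (m : M) : (single m 1 - 1 : MonoidAlgebra ℤ M) ∈ augIdeal M := by
  rw [mem_augIdeal_iff, map_sub, map_one, aug_single, sub_self]

lemma one_sub_single_mem (m : M) : (1 - single m 1 : MonoidAlgebra ℤ M) ∈ augIdeal M := by
  have := Submodule.neg_mem _ (single_sub_one_mem M m)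
  rwa [neg_sub] at this

lemma geom_helper_left {R : Type*} [Ring R] (x : R) (k : ℕ) :
    x * (∑ j ∈ Finset.range k, (1 - x) ^ j) - 1 = -((1 - x) ^ k) := by
  have h := mul_geom_sum (1 - x) k
  have h2 : (1 - x) - 1 = -x := by abel
  rw [h2, neg_mul] at h
  rw [← neg_neg (x * ∑ j ∈ Finset.range k, (1 - x) ^ j), h]
  abel

lemma geom_helper_right {R : Type*} [Ring R] (x : R) (k : ℕ) :
    (∑ j ∈ Finset.range k, (1 - x) ^ j) * x - 1 = -((1 - x) ^ k) := by
  have h := geom_sum_mul (1 - x) k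
  have h2 : (1 - x) - 1 = -x := by abel
  rw [h2, mul_neg] at h
  rw [← neg_neg ((∑ j ∈ Finset.range k, (1 - x) ^ j) * x), h]
  abel

lemma single_mul_geomInv (m : M) :
    single m 1 * geomInv M n m - 1 ∈ Jmod M n := by
  rw [geomInv, geom_helper_left]
  exact Submodule.neg_mem _ (Submodule.pow_mem_pow _ (one_sub_single_mem M m) (n + 1))

lemma geomInv_mul_single (m : M) :
    geomInv M n m * single m 1 - 1 ∈ Jmod M n := by
  rw [geomInv, geom_helper_right]
  exact Submodule.neg_mem _ (Submodule.pow_mem_pow _ (one_sub_single_mem M m) (n + 1))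

/-- The monoid homomorphism `M →* (End ℤ Q)ˣ`. -/
noncomputable def psi : M →* (Module.End ℤ (Qmod M n))ˣ where
  toFun m :=
    { val := rho M n (single m 1)
      inv := rho M n (geomInv M n m)
      val_inv := by rw [← rho_mul]; exact rho_eq_one M n (single_mul_geomInv M n m)
      inv_val := by rw [← rho_mul]; exact rho_eq_one M n (geomInv_mul_single M n m) }
  map_one' := by
    refine Units.ext ?_
    show rho M n (single 1 1) = 1
    rw [← MonoidAlgebra.one_def]
    exact rho_eq_one M n (by simpa using Submodule.zero_mem _)
  map_mul' a b := by
    refine Units.ext ?_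
    show rho M n (single (a * b) 1) = rho M n (single a 1) * rho M n (single b 1)
    rw [← rho_mul, MonoidAlgebra.single_mul_single, mul_one]

/-- The filtration on the quotient. -/
noncomputable def Pfil : ℕ → Submodule ℤ (Qmod M n)
  | 0 => ⊤
  | (k + 1) => Submodule.map (Jmod M n).mkQ ((augIdeal M) ^ (k + 1))

lemma Pfil_succ_le (k : ℕ) : Pfil M n (k + 1) ≤ Pfil M n k := by
  cases k with
  | zero => exact le_top
  | succ k =>
    refine Submodule.map_mono ?_
    rw [pow_succ]
    exact (mul_le_mul' le_rfl le_top).trans (pow_mul_top k)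

lemma Pfil_exists {k : ℕ} {v : Qmod M n} (hv : v ∈ Pfil M n k) :
    ∃ w : MonoidAlgebra ℤ M, Submodule.Quotient.mk w = v ∧ (w ∈ (augIdeal M) ^ k ∨ k = 0) := by
  cases k with
  | zero =>
    obtain ⟨w, hw⟩ := Submodule.mkQ_surjective (Jmod M n) v
    exact ⟨w, hw, Or.inr rfl⟩
  | succ k =>
    obtain ⟨w, hw, rfl⟩ := hv
    exact ⟨w, rfl, Or.inl hw⟩

lemma mk_mem_Pfil_succ {k : ℕ} {w : MonoidAlgebra ℤ M} (hw : w ∈ (augIdeal M) ^ (k + 1)) :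
    (Submodule.Quotient.mk w : Qmod M n) ∈ Pfil M n (k + 1) :=
  ⟨w, hw, rfl⟩

lemma mul_step {k : ℕ} (w : MonoidAlgebra ℤ M) {d : MonoidAlgebra ℤ M}
    (hd : d ∈ augIdeal M) (hw : w ∈ (augIdeal M) ^ k ∨ k = 0) :
    d * w ∈ (augIdeal M) ^ (k + 1) := by
  rcases hw with hw | rfl
  · rw [pow_succ']
    exact Submodule.mul_mem_mul hd hw
  · rw [pow_one]
    exact aug_mul_mem hd w

lemma key_lemma {M : Type u} [Monoid M] {G : Type u} [Group G] (η : M →* G) (n : ℕ)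
    (hgen : ∀ (U : Subgroup G), (∀ m, η m ∈ U) → ∀ g, g ∈ U)
    (φ : G →* (Module.End ℤ (Qmod M n))ˣ)
    (hφη : ∀ m : M, φ (η m) = psi M n m) :
    ∀ (g : G) (k : ℕ) (v : Qmod M n), v ∈ Pfil M n k →
      ((φ g).val v - v ∈ Pfil M n (k + 1) ∧ ((φ g)⁻¹).val v - v ∈ Pfil M n (k + 1)) := by
  have step : ∀ (uu ww : (Module.End ℤ (Qmod M n))ˣ),
      (∀ k v, v ∈ Pfil M n k → uu.val v - v ∈ Pfil M n (k + 1)) →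
      (∀ k v, v ∈ Pfil M n k → ww.val v - v ∈ Pfil M n (k + 1)) →
      ∀ k v, v ∈ Pfil M n k → (uu * ww).val v - v ∈ Pfil M n (k + 1) := by
    intro uu ww hu hw k v hv
    have hwv : ww.val v ∈ Pfil M n k := by
      have h1 := hw k v hv
      have h2 : ww.val v = v + (ww.val v - v) := by abel
      rw [h2]
      exact Submodule.add_mem _ hv (Pfil_succ_le M n k h1)
    have h3 := hu k _ hwv
    have h4 : (uu * ww).val v - v
        = (uu.val (ww.val v) - ww.val v) + (ww.val v - v) := by
      rw [Units.val_mul, Module.End.mul_apply]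
      abel
    rw [h4]
    exact Submodule.add_mem _ h3 (hw k v hv)
  -- the homomorphisms coming from M satisfy the condition
  have hbase : ∀ m : M, ∀ k v, v ∈ Pfil M n k →
      ((psi M n m).val v - v ∈ Pfil M n (k + 1) ∧
        ((psi M n m)⁻¹).val v - v ∈ Pfil M n (k + 1)) := by
    intro m k v hv
    obtain ⟨w, rfl, hw⟩ := Pfil_exists M n hv
    constructor
    · show rho M n (single m 1) (Submodule.Quotient.mk w) - Submodule.Quotient.mk w ∈ _
      rw [rho_mk, ← Submodule.Quotient.mk_sub]
      have h5 : single m 1 * w - w = (single m 1 - 1) * w := by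
        rw [sub_mul, one_mul]
      rw [h5]
      exact mk_mem_Pfil_succ M n (mul_step M w (single_sub_one_mem M m) (by tauto))
    · show rho M n (geomInv M n m) (Submodule.Quotient.mk w) - Submodule.Quotient.mk w ∈ _
      rw [rho_mk, ← Submodule.Quotient.mk_sub]
      have h5 : geomInv M n m * w - w = (geomInv M n m - 1) * w := by
        rw [sub_mul, one_mul]
      rw [h5]
      have h6 : (geomInv M n m - 1) * w
          = ∑ j ∈ Finset.range n, (1 - single m 1) ^ (j + 1) * w := by
        rw [geomInv, Finset.sum_range_succ', pow_zero, add_sub_cancel_right, Finset.sum_mul]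
      rw [h6]
      apply mk_mem_Pfil_succ
      apply Submodule.sum_mem
      intro j _
      have h7 : (1 - single m 1 : MonoidAlgebra ℤ M) ^ (j + 1) * w
          = (1 - single m 1) * ((1 - single m 1) ^ j * w) := by
        rw [pow_succ', mul_assoc]
      rw [h7]
      apply mul_step M _ (one_sub_single_mem M m)
      rcases hw with hw | rfl
      · cases k with
        | zero => exact Or.inr rfl
        | succ k' => exact Or.inl (mul_mem_pow _ hw)
      · exact Or.inr rfl
  intro g
  set U : Subgroup G :=
    { carrier := {g : G | ∀ (k : ℕ) (v : Qmod M n), v ∈ Pfil M n k →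
        ((φ g).val v - v ∈ Pfil M n (k + 1) ∧ ((φ g)⁻¹).val v - v ∈ Pfil M n (k + 1))}
      one_mem' := by
        intro k v hv
        rw [map_one, inv_one, Units.val_one, Module.End.one_apply, sub_self]
        exact ⟨Submodule.zero_mem _, Submodule.zero_mem _⟩
      mul_mem' := by
        intro a b ha hb
        intro k v hv
        constructor
        · rw [map_mul]
          exact step (φ a) (φ b) (fun k v hv => (ha k v hv).1) (fun k v hv => (hb k v hv).1)
            k v hv
        · rw [map_mul, mul_inv_rev]
          exact step (φ b)⁻¹ (φ a)⁻¹ (fun k v hv => (hb k v hv).2) (fun k v hv => (ha k v hv).2)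
            k v hv
      inv_mem' := by
        intro a ha
        intro k v hv
        refine ⟨?_, ?_⟩
        · rw [map_inv]
          exact (ha k v hv).2
        · rw [map_inv, inv_inv]
          exact (ha k v hv).1 } with hU
  refine hgen U ?_ g
  intro m
  show ∀ (k : ℕ) (v : Qmod M n), v ∈ Pfil M n k → _
  intro k v hv
  rw [hφη m]
  exact hbase m k v hv

lemma chain_lemma {M : Type u} [Monoid M] {G : Type u} [Group G] (η : M →* G) (n : ℕ)
    (hgen : ∀ (U : Subgroup G), (∀ m, η m ∈ U) → ∀ g, g ∈ U)
    (φ : G →* (Module.End ℤ (Qmod M n))ˣ)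
    (hφη : ∀ m : M, φ (η m) = psi M n m) :
    ∀ (k : ℕ) (x : MonoidAlgebra ℤ G), x ∈ (augIdeal G) ^ k →
      ∀ (j : ℕ) (v : Qmod M n), v ∈ Pfil M n j →
        ((MonoidAlgebra.lift ℤ (Module.End ℤ (Qmod M n)) G)
          ((Units.coeHom _).comp φ)) x v ∈ Pfil M n (j + k) := by
  set Φ := (MonoidAlgebra.lift ℤ (Module.End ℤ (Qmod M n)) G) ((Units.coeHom _).comp φ) with hΦ
  have key := key_lemma η n hgen φ hφη
  have hdeg1 : ∀ (b : MonoidAlgebra ℤ G), b ∈ augIdeal G →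
      ∀ (j : ℕ) (v : Qmod M n), v ∈ Pfil M n j → Φ b v ∈ Pfil M n (j + 1) := by
    intro b hb
    rw [augIdeal_eq_span] at hb
    refine Submodule.span_induction
      (p := fun b _ => ∀ (j : ℕ) (v : Qmod M n), v ∈ Pfil M n j → Φ b v ∈ Pfil M n (j + 1))
      ?_ ?_ ?_ ?_ hb
    · rintro _ ⟨g, rfl⟩ j v hv
      have h1 : Φ (single g 1 - 1) = (φ g).val - 1 := by
        rw [map_sub, map_one, MonoidAlgebra.lift_single, one_smul]
        rfl
      rw [h1, LinearMap.sub_apply, Module.End.one_apply]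
      exact (key g j v hv).1
    · intro j v hv
      rw [map_zero, LinearMap.zero_apply]
      exact Submodule.zero_mem _
    · intro y z _ _ hy hz j v hv
      rw [map_add, LinearMap.add_apply]
      exact Submodule.add_mem _ (hy j v hv) (hz j v hv)
    · intro c y _ hy j v hv
      rw [map_zsmul, LinearMap.smul_apply]
      exact Submodule.smul_mem _ _ (hy j v hv)
  intro k
  induction k with
  | zero =>
    intro x hx j v hv
    rw [pow_zero, Submodule.one_eq_span, Submodule.mem_span_singleton] at hx
    obtain ⟨c, rfl⟩ := hx
    rw [map_zsmul, map_one, LinearMap.smul_apply, Module.End.one_apply]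
    exact Submodule.smul_mem _ _ hv
  | succ k ih =>
    intro x hx
    rw [pow_succ] at hx
    refine Submodule.mul_induction_on
      (C := fun x => ∀ (j : ℕ) (v : Qmod M n), v ∈ Pfil M n j → Φ x v ∈ Pfil M n (j + (k + 1)))
      hx ?_ ?_
    · intro a ha b hb j v hv
      rw [map_mul, Module.End.mul_apply]
      have h1 := hdeg1 b hb j v hv
      have h2 := ih a ha (j + 1) _ h1
      have h3 : j + 1 + k = j + (k + 1) := by omega
      rwa [h3] at h2
    · intro y z hy hz j v hv
      rw [map_add, LinearMap.add_apply]
      exact Submodule.add_mem _ (hy j v hv) (hz j v hv)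

lemma polyMap_exists {M : Type u} [Monoid M] {G : Type u} [Group G] (η : M →* G)
    (huniv : ∀ (H : Type u) [Group H] (f : M →* H), ∃! φ : G →* H, φ.comp η = f)
    {A : Type*} [AddCommGroup A] (n : ℕ) (f : M → A) (hf : IsPolyMap M n f) :
    ∃ F : G → A, IsPolyMap G n F ∧ F ∘ η = f := by
  have hgen : ∀ (U : Subgroup G), (∀ m, η m ∈ U) → ∀ g, g ∈ U :=
    fun U hU g => subgroup_eq_top η huniv U hU g
  obtain ⟨φ, hφ, -⟩ := huniv ((Module.End ℤ (Qmod M n))ˣ) (psi M n)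
  have hφη : ∀ m, φ (η m) = psi M n m := fun m => DFunLike.congr_fun hφ m
  have hker : Jmod M n ≤ LinearMap.ker (lcM f) :=
    fun x hx => LinearMap.mem_ker.mpr (hf.2 x hx)
  set Tbar : Qmod M n →ₗ[ℤ] A := (Jmod M n).liftQ (lcM f) hker
    with hTbar
  set Φ := (MonoidAlgebra.lift ℤ (Module.End ℤ (Qmod M n)) G) ((Units.coeHom _).comp φ) with hΦ
  refine ⟨fun g => Tbar ((φ g).val (Submodule.Quotient.mk 1)), ⟨?_, ?_⟩, funext fun m => ?_⟩
  · -- value at 1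
    show Tbar ((φ 1).val (Submodule.Quotient.mk 1)) = 0
    rw [map_one, Units.val_one, Module.End.one_apply, hTbar, Submodule.liftQ_apply,
      MonoidAlgebra.one_def]
    exact (lc_single f 1 1).trans (by rw [one_smul]; exact hf.1)
  · -- polynomiality
    intro x hx
    have hrep : ∀ y : MonoidAlgebra ℤ G,
        lcM (fun g => Tbar ((φ g).val (Submodule.Quotient.mk 1))) y
          = Tbar (Φ y (Submodule.Quotient.mk 1)) := by
      intro y
      induction y using MonoidAlgebra.induction_linear with
      | zero => rw [map_zero, map_zero, LinearMap.zero_apply, map_zero]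
      | add p q hp hq =>
        rw [map_add, map_add, LinearMap.add_apply, map_add, hp, hq]
      | single g c =>
        rw [lc_single, hΦ, MonoidAlgebra.lift_single,
          LinearMap.smul_apply, map_smul]
        rfl
    rw [← lcM_apply, hrep x]
    have h1 : (Submodule.Quotient.mk 1 : Qmod M n) ∈ Pfil M n 0 := Submodule.mem_top
    have h2 := chain_lemma η n hgen φ hφη (n + 1) x hx 0 _ h1
    rw [zero_add] at h2
    obtain ⟨w, heq, hw⟩ := Pfil_exists M n h2
    rcases hw with hw | hw
    · rw [← heq, hTbar, Submodule.liftQ_apply]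
      exact hf.2 w hw
    · exact absurd hw (Nat.succ_ne_zero n)
  · -- compatibility with η
    show Tbar ((φ (η m)).val (Submodule.Quotient.mk 1)) = f m
    rw [hφη m]
    show Tbar (rho M n (single m 1) (Submodule.Quotient.mk 1)) = f m
    rw [rho_mk, mul_one, hTbar, Submodule.liftQ_apply]
    exact (lc_single f m 1).trans (one_smul _ _)

lemma polyMap_ext {M : Type u} {G : Type u} [Monoid M] [Group G] (η : M →* G)
    (hgen : ∀ (U : Subgroup G), (∀ m, η m ∈ U) → ∀ g, g ∈ U)
    {A : Type*} [AddCommGroup A] {n : ℕ} {F₁ F₂ : G → A}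
    (h₁ : IsPolyMap G n F₁) (h₂ : IsPolyMap G n F₂)
    (hc : ∀ m, F₁ (η m) = F₂ (η m)) : F₁ = F₂ := by
  classical
  set T : MonoidAlgebra ℤ G →ₗ[ℤ] A :=
    lcM F₁ - lcM F₂ with hT
  have hTJ : ∀ x ∈ (augIdeal G) ^ (n + 1), T x = 0 := by
    intro x hx
    show Finsupp.linearCombination ℤ F₁ x.coeff - Finsupp.linearCombination ℤ F₂ x.coeff = 0
    rw [h₁.2 x hx, h₂.2 x hx, sub_self]
  have hTS : ∀ m : M, T (single (η m) 1) = 0 := by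
    intro m
    show Finsupp.linearCombination ℤ F₁ (Finsupp.single (η m) 1) - Finsupp.linearCombination ℤ F₂ (Finsupp.single (η m) 1) = 0
    rw [Finsupp.linearCombination_single, Finsupp.linearCombination_single, one_smul, one_smul,
      hc m, sub_self]
  set S : Submodule ℤ (MonoidAlgebra ℤ G) :=
    Submodule.span ℤ (Set.range fun m : M => single (η m) 1) with hS
  set Jg : Submodule ℤ (MonoidAlgebra ℤ G) := (augIdeal G) ^ (n + 1) with hJg
  set W : Submodule ℤ (MonoidAlgebra ℤ G) := S ⊔ Jg with hW
  have hSS : S * S ≤ S := by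
    rw [hS, Submodule.span_mul_span]
    rw [Submodule.span_le]
    rintro _ ⟨_, ⟨m, rfl⟩, _, ⟨m', rfl⟩, rfl⟩
    show (single (η m) 1 * single (η m') 1 : MonoidAlgebra ℤ G) ∈ _
    rw [MonoidAlgebra.single_mul_single, mul_one]
    exact Submodule.subset_span ⟨m * m', by show single (η (m * m')) 1 = _; rw [map_mul]⟩
  have hWW : ∀ x ∈ W, ∀ y ∈ W, x * y ∈ W := by
    intro x hx y hy
    rw [hW, Submodule.mem_sup] at hx hy ⊢
    obtain ⟨s, hs, j, hj, rfl⟩ := hx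
    obtain ⟨s', hs', j', hj', rfl⟩ := hy
    exact ⟨s * s', hSS (Submodule.mul_mem_mul hs hs'),
      s * j' + (j * s' + j * j'),
      add_mem (mul_mem_pow s hj') (add_mem (pow_mem_mul hj s') (mul_mem_pow j hj')),
      by rw [mul_add, add_mul, add_mul]; abel⟩
  have hone : (1 : MonoidAlgebra ℤ G) ∈ W := by
    have : (1 : MonoidAlgebra ℤ G) = single (η 1) 1 := by
      rw [map_one, MonoidAlgebra.one_def]
    rw [this]
    exact Submodule.mem_sup_left (Submodule.subset_span ⟨1, rfl⟩)
  have hU : ∀ g : G, (single g 1 : MonoidAlgebra ℤ G) ∈ W := by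
    set U : Subgroup G :=
      { carrier := {g : G | (single g 1 : MonoidAlgebra ℤ G) ∈ W}
        one_mem' := by
          show (single (1 : G) 1 : MonoidAlgebra ℤ G) ∈ W
          rwa [← MonoidAlgebra.one_def]
        mul_mem' := by
          intro a b ha hb
          show (single (a * b) 1 : MonoidAlgebra ℤ G) ∈ W
          have : (single (a * b) 1 : MonoidAlgebra ℤ G) = single a 1 * single b 1 := by
            rw [MonoidAlgebra.single_mul_single, mul_one]
          rw [this]
          exact hWW _ ha _ hb
        inv_mem' := by
          intro g hg
          show (single g⁻¹ 1 : MonoidAlgebra ℤ G) ∈ W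
          set x : MonoidAlgebra ℤ G := single g 1 with hx
          set δ : MonoidAlgebra ℤ G := 1 - x with hδ
          set uu : MonoidAlgebra ℤ G := ∑ j ∈ Finset.range (n + 1), δ ^ j with huu
          have hδI : δ ∈ augIdeal G := by
            rw [mem_augIdeal_iff, hδ, map_sub, map_one, hx, aug_single, sub_self]
          have hxu : x * uu = 1 - δ ^ (n + 1) := by
            have := mul_geom_sum δ (n + 1)
            have h2 : x = -(δ - 1) := by rw [hδ]; abel
            rw [h2, neg_mul, this, neg_sub]
          have hkey : single g⁻¹ 1 = uu + single g⁻¹ 1 * δ ^ (n + 1) := by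
            have h3 : (single g⁻¹ 1 : MonoidAlgebra ℤ G) * (x * uu) = uu := by
              rw [← mul_assoc, hx, MonoidAlgebra.single_mul_single, inv_mul_cancel, mul_one,
                ← MonoidAlgebra.one_def, one_mul]
            rw [hxu, mul_sub, mul_one] at h3
            rw [← h3]
            abel
          rw [hkey]
          apply Submodule.add_mem
          · -- uu ∈ W
            have hδW : ∀ j : ℕ, δ ^ j ∈ W := by
              intro j
              induction j with
              | zero => simpa using hone
              | succ j ih =>
                rw [pow_succ]
                refine hWW _ ih _ ?_
                rw [hδ]
                exact Submodule.sub_mem _ hone hg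
            exact Submodule.sum_mem _ fun j _ => hδW j
          · exact Submodule.mem_sup_right (mul_mem_pow _ (Submodule.pow_mem_pow _ hδI (n + 1)))
      } with hUdef
    intro g
    exact hgen U (fun m => Submodule.mem_sup_left (Submodule.subset_span ⟨m, rfl⟩)) g
  have hTW : ∀ x ∈ W, T x = 0 := by
    intro x hx
    rw [hW, Submodule.mem_sup] at hx
    obtain ⟨s, hs, j, hj, rfl⟩ := hx
    rw [map_add, hTJ j hj, add_zero]
    refine Submodule.span_induction (p := fun s _ => T s = 0) ?_ (map_zero T) ?_ ?_ hs
    · rintro _ ⟨m, rfl⟩; exact hTS m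
    · intro a b _ _ ha hb; rw [map_add, ha, hb, add_zero]
    · intro c a _ ha; rw [map_smul, ha, smul_zero]
  funext g
  have h6 := hTW (single g 1) (hU g)
  have h7 : Finsupp.linearCombination ℤ F₁ (Finsupp.single g (1 : ℤ))
      - Finsupp.linearCombination ℤ F₂ (Finsupp.single g (1 : ℤ)) = 0 := h6
  rw [Finsupp.linearCombination_single, Finsupp.linearCombination_single,
    one_smul, one_smul] at h7
  exact sub_eq_zero.mp h7


lemma polyMap_comp {M : Type*} [Monoid M] {G' : Type*} [Monoid G'] (η : M →* G')
    {A : Type*} [AddCommGroup A] {n : ℕ} (F : G' → A) (hF : IsPolyMap G' n F) :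
    IsPolyMap M n (F ∘ η) := by
  set Φ' := (MonoidAlgebra.lift ℤ (MonoidAlgebra ℤ G') M) ((MonoidAlgebra.of ℤ G').comp η)
    with hΦ'
  have hsing : ∀ (m : M) (c : ℤ), Φ' (single m c) = single (η m) c := by
    intro m c
    rw [hΦ', MonoidAlgebra.lift_single]
    show c • single (η m) 1 = _
    rw [MonoidAlgebra.smul_single', mul_one]
  have hcomm : ∀ x : MonoidAlgebra ℤ M, augA G' (Φ' x) = augA M x := by
    intro x
    induction x using MonoidAlgebra.induction_linear with
    | zero => rw [map_zero, map_zero, map_zero]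
    | add p q hp hq => rw [map_add, map_add, map_add, hp, hq]
    | single a b => rw [hsing, aug_single, aug_single]
  have haug : Submodule.map Φ'.toLinearMap (augIdeal M) ≤ augIdeal G' := by
    intro y hy
    obtain ⟨x, hx, rfl⟩ := hy
    have : augA G' (Φ' x) = 0 := by
      rw [hcomm x]
      exact (mem_augIdeal_iff x).mp hx
    exact (mem_augIdeal_iff _).mpr this
  have hpow : ∀ x ∈ (augIdeal M) ^ (n + 1), Φ' x ∈ (augIdeal G') ^ (n + 1) := by
    intro x hx
    have h1 : Φ' x ∈ Submodule.map Φ'.toLinearMap ((augIdeal M) ^ (n + 1)) := ⟨x, hx, rfl⟩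
    rw [Submodule.map_pow] at h1
    exact pow_le_pow' haug (n + 1) h1
  constructor
  · show F (η 1) = 0
    rw [map_one]
    exact hF.1
  · intro x hx
    have hlc : ∀ y : MonoidAlgebra ℤ M,
        lcM (F ∘ η) y = lcM F (Φ' y) := by
      intro y
      induction y using MonoidAlgebra.induction_linear with
      | zero => rw [map_zero, map_zero, map_zero]
      | add p q hp hq => rw [map_add, map_add, map_add, hp, hq]
      | single a b =>
        rw [hsing]
        exact (lc_single (F ∘ η) a b).trans (lc_single F (η a) b).symm
    rw [← lcM_apply, hlc x]
    exact hF.2 _ (hpow x hx)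

end PolyAux

/-- Precomposition with the unit `η_M : M → U(g(M))` of the
groupification adjunction identifies polynomial maps of degree `≤ n` on the
groupification with polynomial maps of degree `≤ n` on the monoid:
it is well defined and bijective (hence an isomorphism of the abelian groups
`Map_n(U(g(M)), A) → Map_n(M, A)` of polynomial maps under pointwise addition). -/
theorem polyMap_groupification_equiv
    {M : Type u} [Monoid M] {G : Type u} [Group G] (η : M →* G)
    (huniv : ∀ (H : Type u) [Group H] (f : M →* H),
      ∃! φ : G →* H, φ.comp η = f)
    (A : Type*) [AddCommGroup A] (n : ℕ) :
    (∀ F : G → A, IsPolyMap G n F → IsPolyMap M n (F ∘ η)) ∧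
    (∀ f : M → A, IsPolyMap M n f →
      ∃! F : G → A, IsPolyMap G n F ∧ F ∘ η = f) := by
  constructor
  · intro F hF
    exact PolyAux.polyMap_comp η F hF
  · intro f hf
    obtain ⟨F, hF, hcomp⟩ := PolyAux.polyMap_exists η huniv n f hf
    refine ⟨F, ⟨hF, hcomp⟩, ?_⟩
    rintro F' ⟨hF', hcomp'⟩
    refine PolyAux.polyMap_ext η
      (fun U hU g => PolyAux.subgroup_eq_top η huniv U hU g) hF' hF ?_
    intro m
    have h1 : F' (η m) = f m := congrFun hcomp' m
    have h2 : F (η m) = f m := congrFun hcomp m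
    rw [h1, h2]
end

section
/- Let (X, ≤) be a finite poset in which every pair {x,y} has a greatest lower bound x∧y, having a greatest element 1. Let R be a ring with identity 1_R, and suppose α ↦ e_α is a map X → R with e_α e_β = e_{α∧β} for all α, β ∈ X, and e_1 = 1_R. Define f_α = Σ_{β ≤ α} μ_X(β, α) e_β, where μ_X is the Möbius function of X. Then the elements f_α, α ∈ X, are pairwise orthogonal idempotents of R whose sum equals 1_R, and e_α = Σ_{β ≤ α} f_β. -/
/-!
Möbius inversion gives `e a = ∑_{b ≤ a} f b`. Multiplicativity then turns
`e c * f a = ∑_{b ≤ a} μ(b, a) e (c ⊓ b)` into `∑_{b ≤ a} μ(b, a) ∑_{x ≤ b} [x ≤ c] f x`, which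
Möbius inversion collapses to `[a ≤ c] f a`. Substituting this into
`f a * f b = ∑_{c ≤ a} μ(c, a) e c f b` and collapsing once more gives `[a = b] f b`; the sum of
all `f a` is `e ⊤ = 1`.
-/

open Finset IncidenceAlgebra

theorem sum_le_sum_le_eq_sum_le_sum_Icc {X M : Type*} [PartialOrder X] [Fintype X]
    [LocallyFiniteOrder X] [DecidableLE X] [AddCommMonoid M] (a : X) (F : X → X → M) :
    ∑ b ∈ {b | b ≤ a}, ∑ x ∈ {x | x ≤ b}, F x b = ∑ x ∈ {x | x ≤ a}, ∑ b ∈ Icc x a, F x b := by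
  refine sum_comm' fun b x => ?_
  simp only [mem_filter_univ, mem_Icc]
  exact ⟨fun ⟨hba, hxb⟩ => ⟨⟨hxb, hba⟩, hxb.trans hba⟩, fun ⟨⟨hxb, hba⟩, _⟩ => ⟨hba, hxb⟩⟩

section Inversion

variable {X M : Type*} [PartialOrder X] [Fintype X] [LocallyFiniteOrder X] [DecidableEq X]
  [DecidableLE X] [AddCommGroup M]

theorem sum_le_mu_smul_sum_le (g : X → M) (a : X) :
    ∑ b ∈ {b | b ≤ a}, mu ℤ b a • ∑ x ∈ {x | x ≤ b}, g x = g a := by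
  simp_rw [smul_sum]
  rw [sum_le_sum_le_eq_sum_le_sum_Icc]
  simp_rw [← sum_smul, sum_Icc_mu_left, ite_smul, one_smul, zero_smul]
  simp

theorem sum_le_sum_le_mu_smul (g : X → M) (a : X) :
    ∑ b ∈ {b | b ≤ a}, ∑ x ∈ {x | x ≤ b}, mu ℤ x b • g x = g a := by
  rw [sum_le_sum_le_eq_sum_le_sum_Icc]
  simp_rw [← sum_smul, sum_Icc_mu_right, ite_smul, one_smul, zero_smul]
  simp

end Inversion

section MoebiusIdempotent

variable {X R : Type*} [PartialOrder X] [Fintype X] [LocallyFiniteOrder X] [DecidableEq X]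
  [DecidableLE X] [Ring R]

def moebiusIdempotent (e : X → R) (a : X) : R :=
  ∑ b ∈ {b | b ≤ a}, mu ℤ b a • e b

theorem sum_le_moebiusIdempotent (e : X → R) (a : X) :
    ∑ b ∈ {b | b ≤ a}, moebiusIdempotent e b = e a :=
  sum_le_sum_le_mu_smul e a

end MoebiusIdempotent

section Multiplicative

variable {X R : Type*} [SemilatticeInf X] [Fintype X] [LocallyFiniteOrder X] [DecidableEq X]
  [DecidableLE X] [Ring R] {e : X → R} (hmul : ∀ a b, e a * e b = e (a ⊓ b))
include hmul

theorem mul_moebiusIdempotent (c a : X) :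
    e c * moebiusIdempotent e a = if a ≤ c then moebiusIdempotent e a else 0 := by
  have he : ∀ b, e (c ⊓ b) = ∑ x ∈ {x | x ≤ b}, if x ≤ c then moebiusIdempotent e x else 0 := by
    intro b
    simp only [← sum_filter, filter_filter, ← le_inf_iff, inf_comm b]
    exact (sum_le_moebiusIdempotent e _).symm
  calc e c * moebiusIdempotent e a
      = ∑ b ∈ {b | b ≤ a}, mu ℤ b a • e (c ⊓ b) := by
        simp only [moebiusIdempotent, mul_sum, mul_smul_comm, hmul]
    _ = ∑ b ∈ {b | b ≤ a}, mu ℤ b a •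
          ∑ x ∈ {x | x ≤ b}, if x ≤ c then moebiusIdempotent e x else 0 := by
        simp only [he]
    _ = _ := sum_le_mu_smul_sum_le _ a

theorem moebiusIdempotent_mul (a b : X) :
    moebiusIdempotent e a * moebiusIdempotent e b =
      if a = b then moebiusIdempotent e b else 0 := by
  have hindicator : ∀ c, e c * moebiusIdempotent e b =
      ∑ x ∈ {x | x ≤ c}, if x = b then moebiusIdempotent e b else 0 := by
    intro c
    rw [mul_moebiusIdempotent hmul, sum_ite_eq']
    simp only [mem_filter_univ]
  calc moebiusIdempotent e a * moebiusIdempotent e b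
      = ∑ c ∈ {c | c ≤ a}, mu ℤ c a • (e c * moebiusIdempotent e b) := by
        simp only [moebiusIdempotent, sum_mul, smul_mul_assoc]
    _ = ∑ c ∈ {c | c ≤ a}, mu ℤ c a •
          ∑ x ∈ {x | x ≤ c}, if x = b then moebiusIdempotent e b else 0 := by
        simp only [hindicator]
    _ = _ := sum_le_mu_smul_sum_le _ a

end Multiplicative

/-- Let `(X, ≤)` be a finite poset in which every pair has a
greatest lower bound (a meet-semilattice), with a greatest element `⊤`.
Let `R` be a ring, and `α ↦ e α` a map `X → R` with `e α * e β = e (α ⊓ β)` and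
`e ⊤ = 1`.  Defining `f α = ∑_{β ≤ α} μ_X(β, α) • e β`, where `μ_X` is the
Möbius function of `X`, the `f α` are pairwise orthogonal idempotents whose sum
is `1`, and moreover `e α = ∑_{β ≤ α} f β`. -/
theorem moebius_orthogonal_idempotents
    (X : Type*) [Fintype X] [SemilatticeInf X] [OrderTop X]
    [LocallyFiniteOrder X] [DecidableEq X] [DecidableRel (α := X) (· ≤ ·)]
    (R : Type*) [Ring R] (e : X → R)
    (hmul : ∀ α β : X, e α * e β = e (α ⊓ β)) (htop : e ⊤ = 1)
    (f : X → R)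
    (hf : ∀ α : X, f α =
      ∑ β ∈ Finset.univ.filter (fun β => β ≤ α),
        (IncidenceAlgebra.mu ℤ β α : ℤ) • e β) :
    (∀ α : X, f α * f α = f α) ∧
    (∀ α β : X, α ≠ β → f α * f β = 0) ∧
    (∑ α : X, f α = 1) ∧
    (∀ α : X, e α = ∑ β ∈ Finset.univ.filter (fun β => β ≤ α), f β) := by
  obtain rfl : f = moebiusIdempotent e := funext hf
  refine ⟨fun a => ?_, fun a b hab => ?_, ?_, fun a => (sum_le_moebiusIdempotent e a).symm⟩
  · rw [moebiusIdempotent_mul hmul, if_pos rfl]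
  · rw [moebiusIdempotent_mul hmul, if_neg hab]
  · have hall : ({a | a ≤ ⊤} : Finset X) = univ := filter_true_of_mem fun _ _ => le_top
    rw [← htop, ← sum_le_moebiusIdempotent e ⊤, hall]
end

section
/- Let [n] = {0, 1, ..., n} be a finite pointed set with basepoint 0. For a subset A of [n] containing 0, let e_A: [n] → [n] be the idempotent pointed map with e_A(j) = j if j ∈ A and e_A(j) = 0 otherwise. Define f_A = Σ_{B ⊆ A, 0 ∈ B} (-1)^{|A \ B|} e_B in the monoid ring ℤ[End([n])] of pointed endomorphisms of [n]. Then the f_A (over all subsets A containing 0) are pairwise orthogonal idempotents whose sum is the identity. -/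
open Finset

/-- The monoid of pointed endomorphisms of the pointed set `[n] = {0,…,n}`
(maps sending the basepoint `0` to `0`), as a submonoid of `Function.End`. -/
def PEnd (n : ℕ) : Submonoid (Function.End (Fin (n + 1))) where
  carrier := {f | f 0 = 0}
  one_mem' := rfl
  mul_mem' := by
    intro f g hf hg
    show f (g 0) = 0
    rw [hg, hf]

/-- The idempotent `e_A : [n] → [n]` associated to a subset `A ⊆ [n]`:
`e_A(j) = j` if `j ∈ A`, and `e_A(j) = 0` otherwise, viewed as a basis element
of the monoid ring `ℤ[End([n])]`. -/
noncomputable def eElt (n : ℕ) (A : Finset (Fin (n + 1))) :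
    MonoidAlgebra ℤ (PEnd n) :=
  MonoidAlgebra.of ℤ (PEnd n)
    ⟨fun j => if j ∈ A then j else 0, show (if (0 : Fin (n+1)) ∈ A then (0 : Fin (n+1)) else 0) = 0 by
      by_cases h : (0 : Fin (n + 1)) ∈ A <;> simp [h]⟩

/-- The element `f_A = ∑_{B ⊆ A, 0 ∈ B} (-1)^{|A \ B|} e_B ∈ ℤ[End([n])]`. -/
noncomputable def fElt (n : ℕ) (A : Finset (Fin (n + 1))) :
    MonoidAlgebra ℤ (PEnd n) :=
  ∑ B ∈ A.powerset.filter (fun B => (0 : Fin (n + 1)) ∈ B),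
    ((-1 : ℤ) ^ ((A \ B).card)) • eElt n B

/-!
For any family `e` of ring elements with `e A * e B = e (A ∩ B)`, put
`f_A = ∑_{s ⊆ B ⊆ A} (-1)^{|A \ B|} e_B`. If `a ∈ A \ C` with `s ⊆ C`, the terms of `e_C f_A`
indexed by `B` and `insert a B` cancel, so `e_C f_A = [A ⊆ C] f_A`. Expanding `f_B` then gives
`f_B f_A = (∑_{A ⊆ C ⊆ B} (-1)^{|B \ C|}) f_A = [A = B] f_A`, while Möbius inversion on the
interval `[s, t]` gives `∑_{s ⊆ A ⊆ t} f_A = e_t`. Take `s = {0}` and `t = [n]`, where `e_{[n]} = 1`.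
-/

namespace Finset

variable {α : Type*} [DecidableEq α]

theorem sum_Icc_neg_one_pow_card_sdiff_left (A B : Finset α) :
    ∑ C ∈ Icc A B, (-1 : ℤ) ^ #(C \ A) = if A = B then 1 else 0 := by
  by_cases hAB : A ⊆ B
  · have hdisj : ∀ D ∈ (B \ A).powerset, Disjoint A D := fun D hD =>
      disjoint_sdiff.mono_right (mem_powerset.1 hD)
    have hinj : Set.InjOn (A ∪ ·) (B \ A).powerset := fun D hD D' hD' h => by
      rw [← union_sdiff_cancel_left (hdisj D hD), ← union_sdiff_cancel_left (hdisj D' hD')]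
      exact congrArg (· \ A) h
    rw [Icc_eq_image_powerset hAB, sum_image hinj,
      sum_congr rfl fun D hD => by rw [union_sdiff_cancel_left (hdisj D hD)],
      sum_powerset_neg_one_pow_card]
    exact if_congr (sdiff_eq_empty_iff_subset.trans ⟨subset_antisymm hAB, fun h => h ▸ subset_rfl⟩)
      rfl rfl
  · rw [Icc_eq_empty (by simpa using hAB), sum_empty, if_neg (by rintro rfl; exact hAB subset_rfl)]

theorem sum_Icc_neg_one_pow_card_sdiff_right (A B : Finset α) :
    ∑ C ∈ Icc A B, (-1 : ℤ) ^ #(B \ C) = if A = B then 1 else 0 := by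
  have hsign : ∀ C ∈ Icc A B, (-1 : ℤ) ^ #(B \ C) = (-1) ^ #(B \ A) * (-1) ^ #(C \ A) := by
    intro C hC
    obtain ⟨hAC, hCB⟩ := mem_Icc.1 hC
    have hcard : #(B \ A) = #(B \ C) + #(C \ A) := by
      rw [card_sdiff_of_subset hCB, card_sdiff_of_subset hAC,
        card_sdiff_of_subset (hAC.trans hCB)]
      have := card_le_card hAC
      have := card_le_card hCB
      omega
    rw [hcard, pow_add, mul_assoc, ← mul_pow, neg_one_mul, neg_neg, one_pow, mul_one]
  rw [sum_congr rfl hsign, ← mul_sum, sum_Icc_neg_one_pow_card_sdiff_left]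
  split_ifs with h <;> simp [h]

theorem sum_Icc_insert {M : Type*} [AddCommMonoid M] {s A : Finset α} {a : α} (has : a ∉ s)
    (haA : a ∉ A) (g : Finset α → M) :
    ∑ B ∈ Icc s (insert a A), g B = ∑ B ∈ Icc s A, (g B + g (insert a B)) := by
  simp only [Icc_eq_filter_powerset, sum_filter, sum_powerset_insert haA,
    subset_insert_iff_of_notMem has, ← sum_add_distrib, ite_add_ite, add_zero]

end Finset

section MobiusSum

open Finset

variable {α R : Type*} [DecidableEq α] [Ring R]

def mobiusSum (e : Finset α → R) (s A : Finset α) : R :=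
  ∑ B ∈ Icc s A, (-1 : ℤ) ^ #(A \ B) • e B

variable {e : Finset α → R} {s : Finset α}

theorem sum_Icc_mobiusSum {t : Finset α} (hst : s ⊆ t) :
    ∑ A ∈ Icc s t, mobiusSum e s A = e t := by
  unfold mobiusSum
  rw [sum_comm' (t' := Icc s t) (s' := fun B => Icc B t) fun A B => by
    simp only [mem_Icc]
    exact ⟨fun h => ⟨⟨h.2.2, h.1.2⟩, h.2.1, h.2.2.trans h.1.2⟩,
      fun h => ⟨⟨h.2.1.trans h.1.1, h.1.2⟩, h.2.1, h.1.1⟩⟩]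
  simp only [← sum_smul, sum_Icc_neg_one_pow_card_sdiff_left, ite_smul, one_smul, zero_smul]
  rw [sum_ite_eq', if_pos (mem_Icc.2 ⟨hst, subset_rfl⟩)]

variable (he : ∀ A B, e A * e B = e (A ∩ B))
include he

theorem mul_mobiusSum_of_subset {A C : Finset α} (hAC : A ⊆ C) :
    e C * mobiusSum e s A = mobiusSum e s A := by
  simp only [mobiusSum, mul_sum, mul_smul_comm, he]
  refine sum_congr rfl fun B hB => ?_
  rw [inter_eq_right.2 ((mem_Icc.1 hB).2.trans hAC)]

theorem mul_mobiusSum_of_not_subset {A C : Finset α} (hsC : s ⊆ C) (hAC : ¬A ⊆ C) :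
    e C * mobiusSum e s A = 0 := by
  obtain ⟨a, haA, haC⟩ := not_subset.1 hAC
  have has : a ∉ s := fun h => haC (hsC h)
  simp only [mobiusSum, mul_sum, mul_smul_comm, he]
  rw [← insert_erase haA, sum_Icc_insert has (notMem_erase a A)]
  refine sum_eq_zero fun B hB => ?_
  have haB : a ∉ B := fun h => notMem_erase a A ((mem_Icc.1 hB).2 h)
  rw [inter_insert_of_notMem haC, insert_sdiff_of_notMem _ haB, insert_sdiff_insert,
    sdiff_insert_of_notMem (notMem_erase a A), card_insert_of_notMem (by simp), pow_succ,
    mul_neg_one, neg_smul, neg_add_cancel]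

theorem mul_mobiusSum {A C : Finset α} (hsC : s ⊆ C) :
    e C * mobiusSum e s A = if A ⊆ C then mobiusSum e s A else 0 := by
  split_ifs with hAC
  exacts [mul_mobiusSum_of_subset he hAC, mul_mobiusSum_of_not_subset he hsC hAC]

theorem mobiusSum_mul_mobiusSum {A B : Finset α} (hsA : s ⊆ A) :
    mobiusSum e s B * mobiusSum e s A = if A = B then mobiusSum e s A else 0 := by
  have hIcc : {C ∈ Icc s B | A ⊆ C} = Icc A B := by
    ext C
    simp only [mem_filter, mem_Icc]
    exact ⟨fun h => ⟨h.2, h.1.2⟩, fun h => ⟨⟨hsA.trans h.1, h.2⟩, h.1⟩⟩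
  calc mobiusSum e s B * mobiusSum e s A
      = ∑ C ∈ Icc s B, (if A ⊆ C then (-1 : ℤ) ^ #(B \ C) else 0) • mobiusSum e s A := by
        simp only [mobiusSum, sum_mul, smul_mul_assoc]
        refine sum_congr rfl fun C hC => ?_
        rw [← mobiusSum, mul_mobiusSum he (mem_Icc.1 hC).1, smul_ite, ite_smul, zero_smul,
          smul_zero]
    _ = if A = B then mobiusSum e s A else 0 := by
        rw [← sum_smul, ← sum_filter, hIcc, sum_Icc_neg_one_pow_card_sdiff_right, ite_smul,
          one_smul, zero_smul]

end MobiusSum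

theorem eElt_mul (n : ℕ) (A B : Finset (Fin (n + 1))) :
    eElt n A * eElt n B = eElt n (A ∩ B) := by
  rw [eElt, eElt, ← map_mul]
  refine congrArg _ (Subtype.ext (funext fun j => ?_))
  show (if (if j ∈ B then j else 0) ∈ A then (if j ∈ B then j else 0) else 0) =
    if j ∈ A ∩ B then j else 0
  by_cases hB : j ∈ B <;> by_cases hA : j ∈ A <;> simp [hA, hB]

theorem eElt_univ (n : ℕ) : eElt n univ = 1 := by
  rw [eElt, ← map_one (MonoidAlgebra.of ℤ (PEnd n))]
  refine congrArg _ (Subtype.ext (funext fun j => ?_))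
  show (if j ∈ univ then j else 0) = j
  rw [if_pos (mem_univ j)]

theorem fElt_eq_mobiusSum (n : ℕ) (A : Finset (Fin (n + 1))) :
    fElt n A = mobiusSum (eElt n) {0} A := by
  simp only [fElt, mobiusSum, Icc_eq_filter_powerset, singleton_subset_iff]

/-- The elements `f_A`, for `A` ranging over the subsets of
`[n]` containing the basepoint `0`, are pairwise orthogonal idempotents of the
monoid ring `ℤ[End([n])]` whose sum is the identity. -/
theorem fElt_orthogonal_idempotents (n : ℕ) :
    (∀ A : Finset (Fin (n + 1)), (0 : Fin (n + 1)) ∈ A →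
      fElt n A * fElt n A = fElt n A) ∧
    (∀ A B : Finset (Fin (n + 1)), (0 : Fin (n + 1)) ∈ A →
      (0 : Fin (n + 1)) ∈ B → A ≠ B → fElt n A * fElt n B = 0) ∧
    (∑ A ∈ Finset.univ.filter (fun A : Finset (Fin (n + 1)) =>
        (0 : Fin (n + 1)) ∈ A), fElt n A = 1) := by
  simp only [fElt_eq_mobiusSum]
  refine ⟨fun A hA => ?_, fun A B _ hB hAB => ?_, ?_⟩
  · rw [mobiusSum_mul_mobiusSum (eElt_mul n) (singleton_subset_iff.2 hA), if_pos rfl]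
  · rw [mobiusSum_mul_mobiusSum (eElt_mul n) (singleton_subset_iff.2 hB), if_neg hAB.symm]
  · have hIcc : univ.filter (fun A : Finset (Fin (n + 1)) => 0 ∈ A) = Icc {0} univ := by
      simp [Icc_eq_filter_powerset]
    rw [hIcc, sum_Icc_mobiusSum (subset_univ _), eElt_univ]
end

section
/- For each n ≥ 1, the n-th cross-effect functor cr_n: Func(C, D) → Func(C^n, D) is exact, i.e. it takes short exact sequences of functors (pointwise in an abelian category D) to short exact sequences. -/
open CategoryTheory CategoryTheory.Limits

universe u v w

variable {C : Type u} [Category.{v} C] [HasZeroMorphisms C] [HasFiniteCoproducts C]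

/-- The retraction `r_k : X₁ ∨ ⋯ ∨ X_n → X₁ ∨ ⋯ ∨ X̂_k ∨ ⋯ ∨ X_n` killing the
`k`-th summand. -/
noncomputable def rhat {ι : Type} [Fintype ι] [DecidableEq ι] (X : ι → C) (k : ι) :
    (∐ X) ⟶ ∐ (fun i : {i : ι // i ≠ k} => X i.1) :=
  Sigma.desc (fun i =>
    if h : i = k then 0 else Sigma.ι (fun i : {i : ι // i ≠ k} => X i.1) ⟨i, h⟩)

/-- The cross-effect `cr F (X₁,…,X_n)` as a subgroup of `F(X₁ ∨ ⋯ ∨ X_n)`. -/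
noncomputable def crSub (F : C ⥤ AddCommGrpCat.{w}) {ι : Type} [Fintype ι]
    [DecidableEq ι] (X : ι → C) : AddSubgroup (F.obj (∐ X)) :=
  ⨅ k : ι, AddMonoidHom.ker (F.map (rhat X k)).hom

/-!
The cross-effect of `F` at `X` is the image of the idempotent
`p = ∑_S (-1)^|Sᶜ| F(π_S)` of `F(∐ X)`, where `π_S` keeps the summands indexed by `S` and kills
the others. For `k ∉ S` the map `π_S` factors through `r_k`, so `p` fixes the cross-effect; and
`π_S ≫ r_k = π_{S \ {k}} ≫ r_k` makes the terms of `p ≫ F(r_k)` cancel in pairs `S`, `S ∪ {k}`.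
Since `p` is natural in `F`, every element of `cr G(X)` with a preimage in `F(∐ X)` has one in
`cr F(X)`, which gives exactness in the middle and surjectivity on the right.
-/

lemma Finset.sum_neg_one_pow_card_compl_zsmul_erase {ι : Type*} [Fintype ι] [DecidableEq ι]
    {M : Type*} [AddCommGroup M] (k : ι) (f : Finset ι → M) :
    ∑ S : Finset ι, (-1 : ℤ) ^ Sᶜ.card • f (S.erase k) = 0 := by
  have hk : k ∉ Finset.univ.erase k := Finset.notMem_erase k _
  rw [← Finset.powerset_univ, ← Finset.insert_erase (Finset.mem_univ k),
    Finset.sum_powerset_insert hk, ← Finset.sum_add_distrib]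
  refine Finset.sum_eq_zero fun T hT => ?_
  have hkT : k ∉ T := fun h => hk (Finset.mem_powerset.1 hT h)
  have hcard : Tᶜ.card = (insert k T)ᶜ.card + 1 := by
    rw [Finset.compl_insert, Finset.card_erase_add_one (Finset.mem_compl.2 hkT)]
  rw [Finset.erase_insert hkT, Finset.erase_eq_of_notMem hkT, hcard, pow_succ, mul_neg_one,
    neg_smul, neg_add_cancel]

section CrossEffect

variable {ι : Type} [Fintype ι] [DecidableEq ι]

noncomputable def sigmaRestrict (X : ι → C) (S : Finset ι) : ∐ X ⟶ ∐ X :=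
  Sigma.desc fun i => if i ∈ S then Sigma.ι X i else 0

lemma sigmaRestrict_univ (X : ι → C) : sigmaRestrict X Finset.univ = 𝟙 (∐ X) :=
  Sigma.hom_ext _ _ fun i => by simp [sigmaRestrict]

lemma sigmaRestrict_comp_rhat (X : ι → C) (S : Finset ι) (k : ι) :
    sigmaRestrict X S ≫ rhat X k = sigmaRestrict X (S.erase k) ≫ rhat X k := by
  refine Sigma.hom_ext _ _ fun i => ?_
  by_cases hik : i = k
  · subst hik
    by_cases hiS : i ∈ S <;> simp [sigmaRestrict, rhat, hiS]
  · by_cases hiS : i ∈ S <;> simp [sigmaRestrict, rhat, hiS, hik]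

lemma sigmaRestrict_factors_through_rhat (X : ι → C) {S : Finset ι} {k : ι} (hk : k ∉ S) :
    ∃ g, sigmaRestrict X S = rhat X k ≫ g := by
  refine ⟨Sigma.desc fun i => if i.1 ∈ S then Sigma.ι X i.1 else 0,
    Sigma.hom_ext _ _ fun i => ?_⟩
  by_cases hik : i = k
  · subst hik
    simp [sigmaRestrict, rhat, hk]
  · simp [sigmaRestrict, rhat, hik]

lemma mem_crSub_iff (F : C ⥤ AddCommGrpCat.{w}) (X : ι → C) (x : F.obj (∐ X)) :
    x ∈ crSub F X ↔ ∀ k, F.map (rhat X k) x = 0 := by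
  simp [crSub, AddSubgroup.mem_iInf, AddMonoidHom.mem_ker]

lemma map_mem_crSub {F G : C ⥤ AddCommGrpCat.{w}} (φ : F ⟶ G) (X : ι → C) {x : F.obj (∐ X)}
    (hx : x ∈ crSub F X) : φ.app (∐ X) x ∈ crSub G X := by
  rw [mem_crSub_iff] at hx ⊢
  intro k
  rw [← NatTrans.naturality_apply, hx k, map_zero]

noncomputable def crProj (F : C ⥤ AddCommGrpCat.{w}) (X : ι → C) : F.obj (∐ X) ⟶ F.obj (∐ X) :=
  ∑ S : Finset ι, (-1 : ℤ) ^ Sᶜ.card • F.map (sigmaRestrict X S)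

lemma crProj_apply (F : C ⥤ AddCommGrpCat.{w}) (X : ι → C) (x : F.obj (∐ X)) :
    crProj F X x = ∑ S : Finset ι, (-1 : ℤ) ^ Sᶜ.card • F.map (sigmaRestrict X S) x := by
  simp [crProj, ← AddCommGrpCat.homAddEquiv_apply, map_sum]

lemma crProj_naturality {F G : C ⥤ AddCommGrpCat.{w}} (φ : F ⟶ G) (X : ι → C) :
    crProj F X ≫ φ.app (∐ X) = φ.app (∐ X) ≫ crProj G X := by
  simp [crProj, Preadditive.sum_comp, Preadditive.comp_sum]

lemma crProj_comp_rhat (F : C ⥤ AddCommGrpCat.{w}) (X : ι → C) (k : ι) :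
    crProj F X ≫ F.map (rhat X k) = 0 := by
  have hcomp : crProj F X ≫ F.map (rhat X k) =
      ∑ S : Finset ι, (-1 : ℤ) ^ Sᶜ.card • F.map (sigmaRestrict X (S.erase k) ≫ rhat X k) := by
    rw [crProj, Preadditive.sum_comp]
    refine Finset.sum_congr rfl fun S _ => ?_
    rw [Preadditive.zsmul_comp, ← F.map_comp, sigmaRestrict_comp_rhat]
  rw [hcomp, Finset.sum_neg_one_pow_card_compl_zsmul_erase k
    (fun S => F.map (sigmaRestrict X S ≫ rhat X k))]

lemma crProj_mem (F : C ⥤ AddCommGrpCat.{w}) (X : ι → C) (x : F.obj (∐ X)) :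
    crProj F X x ∈ crSub F X :=
  (mem_crSub_iff F X _).2 fun k => by
    rw [← ConcreteCategory.comp_apply, crProj_comp_rhat]
    rfl

lemma crProj_eq_self (F : C ⥤ AddCommGrpCat.{w}) (X : ι → C) {x : F.obj (∐ X)}
    (hx : x ∈ crSub F X) : crProj F X x = x := by
  rw [mem_crSub_iff] at hx
  rw [crProj_apply, Finset.sum_eq_single_of_mem Finset.univ (Finset.mem_univ _)]
  · rw [sigmaRestrict_univ, F.map_id, Finset.compl_univ, Finset.card_empty, pow_zero, one_smul]
    rfl
  · intro S _ hS
    obtain ⟨k, hk⟩ : ∃ k, k ∉ S := by simpa [Finset.eq_univ_iff_forall] using hS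
    obtain ⟨g, hg⟩ := sigmaRestrict_factors_through_rhat X hk
    rw [hg, F.map_comp, ConcreteCategory.comp_apply, hx k, map_zero, smul_zero]

lemma exists_mem_crSub_app_eq {F G : C ⥤ AddCommGrpCat.{w}} (φ : F ⟶ G) (X : ι → C)
    {y : G.obj (∐ X)} (hy : y ∈ crSub G X) (hrange : y ∈ Set.range (φ.app (∐ X))) :
    ∃ x ∈ crSub F X, φ.app (∐ X) x = y := by
  obtain ⟨x, rfl⟩ := hrange
  refine ⟨crProj F X x, crProj_mem F X x, ?_⟩
  rw [← ConcreteCategory.comp_apply, crProj_naturality, ConcreteCategory.comp_apply,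
    crProj_eq_self G X hy]

end CrossEffect

theorem cross_effect_exact_general
    (F G H : C ⥤ AddCommGrpCat.{w}) (φ : F ⟶ G) (ψ : G ⟶ H)
    (hinj : ∀ Z : C, Function.Injective (φ.app Z))
    (hexact : ∀ Z : C, Function.Exact (φ.app Z) (ψ.app Z))
    (hsurj : ∀ Z : C, Function.Surjective (ψ.app Z))
    (n : ℕ) (X : Fin n → C) :
    (∀ x ∈ crSub F X, φ.app (∐ X) x ∈ crSub G X) ∧
    (∀ y ∈ crSub G X, ψ.app (∐ X) y ∈ crSub H X) ∧
    (∀ x ∈ crSub F X, φ.app (∐ X) x = 0 → x = 0) ∧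
    (∀ y ∈ crSub G X, ψ.app (∐ X) y = 0 →
      ∃ x ∈ crSub F X, φ.app (∐ X) x = y) ∧
    (∀ z ∈ crSub H X, ∃ y ∈ crSub G X, ψ.app (∐ X) y = z) := by
  refine ⟨fun x => map_mem_crSub φ X, fun y => map_mem_crSub ψ X,
    fun x _ h0 => hinj _ (by rw [h0, map_zero]), fun y hy h0 => ?_, fun z hz => ?_⟩
  · exact exists_mem_crSub_app_eq φ X hy ((hexact _ y).1 h0)
  · exact exists_mem_crSub_app_eq ψ X hz (hsurj _ z)

/-- The `n`-th cross-effect functor is exact: a short exact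
sequence `0 → F → G → H → 0` of functors `C → Ab` (pointwise short exact)
induces, for every `n`-tuple `X` of objects, a short exact sequence
`0 → cr_n F(X) → cr_n G(X) → cr_n H(X) → 0` (the natural transformations
restrict to the cross-effects, and the restricted sequence is again short
exact). -/
theorem cross_effect_exact
    (F G H : C ⥤ AddCommGrpCat.{w}) (φ : F ⟶ G) (ψ : G ⟶ H)
    (hinj : ∀ Z : C, Function.Injective (φ.app Z))
    (hexact : ∀ Z : C, Function.Exact (φ.app Z) (ψ.app Z))
    (hsurj : ∀ Z : C, Function.Surjective (ψ.app Z))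
    (n : ℕ) (hn : 1 ≤ n) (X : Fin n → C) :
    (∀ x ∈ crSub F X, φ.app (∐ X) x ∈ crSub G X) ∧
    (∀ y ∈ crSub G X, ψ.app (∐ X) y ∈ crSub H X) ∧
    (∀ x ∈ crSub F X, φ.app (∐ X) x = 0 → x = 0) ∧
    (∀ y ∈ crSub G X, ψ.app (∐ X) y = 0 →
      ∃ x ∈ crSub F X, φ.app (∐ X) x = y) ∧
    (∀ z ∈ crSub H X, ∃ y ∈ crSub G X, ψ.app (∐ X) y = z) :=
  cross_effect_exact_general F G H φ ψ hinj hexact hsurj n X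
end

section
/- Let C be a pointed category with finite sums, D an abelian category, and M: C^m → D a multireduced multifunctor (M(X₁,...,X_m) = 0 whenever some X_k = 0). Then for 1 ≤ n < m, the n-th polynomial approximation T_n(M ∘ Δ^m) of the composite with the diagonal functor Δ^m: C → C^m vanishes. -/
open CategoryTheory CategoryTheory.Limits

universe u v w

variable {C : Type u} [Category.{v} C] [HasZeroMorphisms C] [HasFiniteCoproducts C]

/-!
Since `n < m` there is a surjection `φ : {1,…,m} → {1,…,n+1}`. Let
`ι_φ : (X,…,X) → (X∨⋯∨X,…,X∨⋯∨X)` have as `j`-th component the inclusion of the `φ(j)`-th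
summand. The fold map is a left inverse of every inclusion, so `y = fold(M(ι_φ) y)` for
every `y ∈ M(X,…,X)`. And `M(ι_φ) y` is a cross-effect: `r_k ∘ ι_φ` has a zero component
at any `j ∈ φ⁻¹(k)`, so `M` kills it because `M` is multireduced.
-/

section

variable {J : Type*} {D : Type*} [Category* D] [HasZeroMorphisms D] [HasZeroObject D]
  {E : Type*} [Category* E] [HasZeroMorphisms E]

def Multireduced (M : (J → D) ⥤ E) : Prop :=
  ∀ (Xs : J → D) (k : J), IsZero (Xs k) → IsZero (M.obj Xs)

open ZeroObject in
theorem Multireduced.map_eq_zero [DecidableEq J] {M : (J → D) ⥤ E} (hM : Multireduced M)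
    {Xs Ys : J → D} (f : Xs ⟶ Ys) (j₀ : J) (hf : f j₀ = 0) : M.map f = 0 := by
  let Z : J → D := fun j => if j = j₀ then 0 else Xs j
  let a : Xs ⟶ Z := fun j =>
    if h : j = j₀ then 0 else eqToHom (if_neg h).symm
  let b : Z ⟶ Ys := fun j =>
    if h : j = j₀ then 0 else eqToHom (if_neg h) ≫ f j
  have hfab : f = a ≫ b := by
    funext j
    change f j = a j ≫ b j
    by_cases h : j = j₀
    · subst h
      simp [a, b, hf]
    · simp [a, b, h]
  have hZ : IsZero (M.obj Z) := hM Z j₀ (by simpa [Z] using isZero_zero D)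
  rw [hfab, M.map_comp, hZ.eq_of_tgt (M.map a) 0, zero_comp]

end

section

variable {J : Type*} {D : Type*} [Category* D] [HasFiniteCoproducts D]

noncomputable def diagIncl {ι : Type} [Fintype ι] (φ : J → ι) (X : D) :
    (Functor.pi' fun _ : J => 𝟭 D).obj X ⟶ (Functor.pi' fun _ : J => 𝟭 D).obj (∐ fun _ : ι => X) :=
  fun j => Sigma.ι (fun _ : ι => X) (φ j)

theorem diagIncl_comp_fold {ι : Type} [Fintype ι] (φ : J → ι) (X : D) :
    diagIncl φ X ≫ (Functor.pi' fun _ : J => 𝟭 D).map (Sigma.desc fun _ : ι => 𝟙 X) = 𝟙 _ := by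
  funext j
  exact Sigma.ι_desc _ _

theorem diagIncl_comp_rhat_apply_eq_zero {ι : Type} [Fintype ι] [DecidableEq ι]
    (φ : J → ι) (X : C) (j : J) :
    (diagIncl φ X ≫ (Functor.pi' fun _ : J => 𝟭 C).map (rhat (fun _ : ι => X) (φ j))) j = 0 :=
  (Sigma.ι_desc _ _).trans (dif_pos rfl)

theorem Multireduced.map_diagIncl_mem_crSub [HasZeroObject C] [DecidableEq J]
    {M : (J → C) ⥤ AddCommGrpCat.{w}} (hM : Multireduced M)
    {ι : Type} [Fintype ι] [DecidableEq ι] {φ : J → ι} (hφ : φ.Surjective) (X : C)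
    (y : (Functor.pi' (fun _ : J => 𝟭 C) ⋙ M).obj X) :
    M.map (diagIncl φ X) y ∈ crSub (Functor.pi' (fun _ : J => 𝟭 C) ⋙ M) (fun _ : ι => X) := by
  refine AddSubgroup.mem_iInf.mpr fun k => AddMonoidHom.mem_ker.mpr ?_
  obtain ⟨j, rfl⟩ := hφ k
  rw [Functor.comp_map, ← ConcreteCategory.comp_apply, ← M.map_comp,
    hM.map_eq_zero _ j (diagIncl_comp_rhat_apply_eq_zero φ X j), AddCommGrpCat.zero_apply]

theorem Multireduced.exists_mem_crSub_fold_eq [HasZeroObject C] [DecidableEq J]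
    {M : (J → C) ⥤ AddCommGrpCat.{w}} (hM : Multireduced M)
    {ι : Type} [Fintype ι] [DecidableEq ι] {φ : J → ι} (hφ : φ.Surjective) (X : C)
    (y : (Functor.pi' (fun _ : J => 𝟭 C) ⋙ M).obj X) :
    ∃ z ∈ crSub (Functor.pi' (fun _ : J => 𝟭 C) ⋙ M) (fun _ : ι => X),
      (Functor.pi' (fun _ : J => 𝟭 C) ⋙ M).map (Sigma.desc fun _ : ι => 𝟙 X) z = y := by
  refine ⟨M.map (diagIncl φ X) y, hM.map_diagIncl_mem_crSub hφ X y, ?_⟩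
  rw [Functor.comp_map, ← ConcreteCategory.comp_apply, ← M.map_comp, diagIncl_comp_fold,
    M.map_id, AddCommGrpCat.id_apply]

end

theorem taylor_of_multireduced_diagonal_vanishes_general [HasZeroObject C]
    (m n : ℕ) (hnm : n < m)
    (M : (Fin m → C) ⥤ AddCommGrpCat.{w})
    (hM : ∀ (Xs : Fin m → C) (k : Fin m), IsZero (Xs k) → IsZero (M.obj Xs)) :
    ∀ (X : C) (y : ((Functor.pi' fun _ : Fin m => 𝟭 C) ⋙ M).obj X),
      ∃ z ∈ crSub ((Functor.pi' fun _ : Fin m => 𝟭 C) ⋙ M)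
          (fun _ : Fin (n + 1) => X),
        ((Functor.pi' fun _ : Fin m => 𝟭 C) ⋙ M).map
          (Sigma.desc fun _ : Fin (n + 1) => 𝟙 X) z = y :=
  Multireduced.exists_mem_crSub_fold_eq hM
    (Function.invFun_surjective (Fin.castLE_injective hnm))

/-- Let `C` be a pointed category with finite sums, `D`
abelian (here `Ab`), and `M : C^m → Ab` a multireduced multifunctor (i.e.
`M(X₁,…,X_m) = 0` whenever some `X_k = 0`).  Then for `1 ≤ n < m` one has
`T_n(M ∘ Δ^m) = 0`, where `Δ^m : C → C^m` is the diagonal.  (Equivalently, as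
stated here: the map `S_{n+1} : cr_{n+1}(MΔ^m)(X,…,X) → (MΔ^m)(X)`, given by
the inclusion of the cross-effect followed by the fold map, is surjective for
every `X`, so the cokernel `T_n(MΔ^m)` vanishes.) -/
theorem taylor_of_multireduced_diagonal_vanishes [HasZeroObject C]
    (m n : ℕ) (hn : 1 ≤ n) (hnm : n < m)
    (M : (Fin m → C) ⥤ AddCommGrpCat.{w})
    (hM : ∀ (Xs : Fin m → C) (k : Fin m), IsZero (Xs k) → IsZero (M.obj Xs)) :
    ∀ (X : C) (y : ((Functor.pi' fun _ : Fin m => 𝟭 C) ⋙ M).obj X),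
      ∃ z ∈ crSub ((Functor.pi' fun _ : Fin m => 𝟭 C) ⋙ M)
          (fun _ : Fin (n + 1) => X),
        ((Functor.pi' fun _ : Fin m => 𝟭 C) ⋙ M).map
          (Sigma.desc fun _ : Fin (n + 1) => 𝟙 X) z = y :=
  taylor_of_multireduced_diagonal_vanishes_general m n hnm M hM
end
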